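/- For all real numbers g, h, k with h ≥ 2, k ≥ 2 and g > h·k, one has (g − h·k)/(k·(g − h)) ≠ (g/(h·k) − 1)² / ((g/h − 1)·(g/k − 1)). -/
import Mathlib


/-- For real `g, h, k` with `h ≥ 2`, `k ≥ 2` and `g > h·k`, the squared
cosine of the Sano–Watatani angle differs from the squared cosine of the interior
angle. -/
theorem sw_angle_ne_interior_angle (g h k : ℝ) (hh : h ≥ 2) (hk : k ≥ 2)
    (hg : g > h * k) :
    (g - h * k) / (k * (g - h)) ≠ (g / (h * k) - 1) ^ 2 / ((g / h - 1) * (g / k - 1)) := by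
  have hh0 : h > 0 := by linarith
  have hk0 : k > 0 := by linarith
  have hgh : g - h > 0 := by nlinarith
  have hgk : g - k > 0 := by nlinarith
  have hghk : g - h * k > 0 := by linarith
  intro heq
  rw [div_eq_div_iff (by positivity) (by
    have h1 : g / h - 1 > 0 := by rw [gt_iff_lt, sub_pos, lt_div_iff₀ hh0]; nlinarith
    have h2 : g / k - 1 > 0 := by rw [gt_iff_lt, sub_pos, lt_div_iff₀ hk0]; nlinarith
    positivity)] at heq
  have hexp : ∀ x : ℝ, x ≠ 0 → g / x - 1 = (g - x) / x := by
    intro x hx; field_simp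
  rw [hexp (h*k) (by positivity)] at heq
  have h2 : g / h - 1 = (g - h) / h := hexp h hh0.ne'
  have h3 : g / k - 1 = (g - k) / k := hexp k hk0.ne'
  rw [h2, h3] at heq
  field_simp at heq
  have hpos : (g - h * k) * (g - h) * (h * k) * (k * (g * (h - 1))) > 0 := by
    have : g * (h - 1) > 0 := by nlinarith
    positivity
  nlinarith [hpos]
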